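/- Let u ∈ Δ(K × (C × C₁) × (D × D₁)) and v = marg_{K×C×D} u. Suppose d₁ is ε-conditionally independent from (k,c) given d, and c₁ is ε-conditionally independent from (k,d) given c. Then for every zero-sum payoff function g bounded by 1, |val(u,g) - val(v,g)| ≤ ε. -/

import Mathlib

open scoped BigOperators

noncomputable section

/-- A probability distribution on a finite type, given as a nonnegative function summing to 1. -/
def IsDist {α : Type*} [Fintype α] (u : α → ℝ) : Prop :=
  (∀ a, 0 ≤ u a) ∧ ∑ a, u a = 1

/-- A garbling (stochastic map / behavioral strategy). -/
def IsKernel {α β : Type*} [Fintype β] (q : α → β → ℝ) : Prop :=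
  ∀ a, IsDist (q a)

/-- Expected payoff in the zero-sum Bayesian game `Γ(u,g)` when players use
behavioral strategies `σ` and `τ`. -/
def pay {K C D I J : Type*} [Fintype K] [Fintype C] [Fintype D] [Fintype I] [Fintype J]
    (u : K × C × D → ℝ) (g : K → I → J → ℝ) (σ : C → I → ℝ) (τ : D → J → ℝ) : ℝ :=
  ∑ k, ∑ c, ∑ d, ∑ i, ∑ j, u (k, c, d) * σ c i * τ d j * g k i j

/-- The value (maxmin) of the zero-sum Bayesian game `Γ(u,g)`, player 1 maximizing. -/
def gameVal {K C D I J : Type*} [Fintype K] [Fintype C] [Fintype D] [Fintype I] [Fintype J]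
    (u : K × C × D → ℝ) (g : K → I → J → ℝ) : ℝ :=
  sSup {x : ℝ | ∃ σ : C → I → ℝ, IsKernel σ ∧
    x = sInf {y : ℝ | ∃ τ : D → J → ℝ, IsKernel τ ∧ y = pay u g σ τ}}

/-- Garbling of player 1's signal: `(q.u)(k,c,d) = ∑ c', u(k,c',d) q(c|c')`. -/
def garbleL {K C C' D : Type*} [Fintype C] (q : C → C' → ℝ) (u : K × C × D → ℝ) :
    K × C' × D → ℝ :=
  fun x => ∑ c, u (x.1, c, x.2.2) * q c x.2.1

/-- Garbling of player 2's signal: `(u.q)(k,c,d) = ∑ d', u(k,c,d') q(d|d')`. -/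
def garbleR {K C D D' : Type*} [Fintype D] (q : D → D' → ℝ) (u : K × C × D → ℝ) :
    K × C × D' → ℝ :=
  fun x => ∑ d, u (x.1, x.2.1, d) * q d x.2.2

/-- ℓ¹ distance. -/
def l1 {α : Type*} [Fintype α] (u v : α → ℝ) : ℝ := ∑ a, |u a - v a|

/-- Payoff functions bounded by 1. -/
def Bounded1 {K I J : Type*} (g : K → I → J → ℝ) : Prop := ∀ k i j, |g k i j| ≤ 1

/-- The value-based distance: sup over all finite zero-sum games (with nonempty
finite action sets, payoffs bounded by 1) of the absolute difference of values. -/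
def valueDist {K C D C' D' : Type*} [Fintype K] [Fintype C] [Fintype D] [Fintype C'] [Fintype D']
    (u : K × C × D → ℝ) (v : K × C' × D' → ℝ) : ℝ :=
  sSup {x : ℝ | ∃ (m n : ℕ) (g : K → Fin (m + 1) → Fin (n + 1) → ℝ),
    Bounded1 g ∧ x = |gameVal u g - gameVal v g|}

/-- Value of a single-agent decision problem on a single-agent information structure. -/
def val1 {K C I : Type*} [Fintype K] [Fintype C] [Fintype I] [Nonempty I]
    (u : K × C → ℝ) (g : K → I → ℝ) : ℝ :=
  ∑ c, ⨆ i, ∑ k, u (k, c) * g k i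

/-- The single-agent value-based distance. -/
def valueDist1 {K C C' : Type*} [Fintype K] [Fintype C] [Fintype C']
    (u : K × C → ℝ) (v : K × C' → ℝ) : ℝ :=
  sSup {x : ℝ | ∃ (m : ℕ) (g : K → Fin (m + 1) → ℝ),
    (∀ k i, |g k i| ≤ 1) ∧ x = |val1 u g - val1 v g|}

/-- Garbling of the signal in a single-agent structure. -/
def garble1 {K C C' : Type*} [Fintype C] (q : C → C' → ℝ) (u : K × C → ℝ) : K × C' → ℝ :=
  fun x => ∑ c, u (x.1, c) * q c x.2

end

/-!
If player 2 ignores `d₁`, the structure `u` becomes `w = marg_{K×(C×C₁)×D} u`, and the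
ε-conditional independence of `c₁` from `(k,d)` given `c` says exactly that `w` is ε-close in `ℓ¹`
to the garbling of `v` which draws `c₁` from `u(c₁ | c)`. Payoffs are 1-Lipschitz in the structure
for the `ℓ¹` norm, and garbling player 1's signal only composes his strategy with the garbling.
Hence every strategy of player 1 in `u` yields one in `v` that guarantees at most `ε` less
against every strategy of player 2 (played in `u` as a strategy ignoring `d₁`), so
`val(u) ≤ val(v) + ε`. Exchanging the roles of `(c, c₁)` and `(d, d₁)` gives
`val(v) ≤ val(u) + ε`.
-/

open Finset

noncomputable section

section Kernels

variable {α β γ : Type*}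

theorem IsDist.nonempty [Fintype α] {u : α → ℝ} (hu : IsDist u) : Nonempty α := by
  by_contra h
  rw [not_nonempty_iff] at h
  simpa using hu.2

theorem isDist_uniform [Fintype β] [Nonempty β] :
    IsDist fun _ : β => (Fintype.card β : ℝ)⁻¹ :=
  ⟨fun _ => by positivity, by simp [Finset.card_univ]⟩

theorem exists_isKernel (α : Type*) [Fintype β] [Nonempty β] : ∃ q : α → β → ℝ, IsKernel q :=
  ⟨_, fun _ => isDist_uniform⟩

def kernelComp [Fintype β] (q : α → β → ℝ) (σ : β → γ → ℝ) : α → γ → ℝ :=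
  fun a c => ∑ b, q a b * σ b c

theorem IsKernel.kernelComp [Fintype β] [Fintype γ] {q : α → β → ℝ} {σ : β → γ → ℝ}
    (hq : IsKernel q) (hσ : IsKernel σ) : IsKernel (kernelComp q σ) := by
  refine fun a => ⟨fun c => sum_nonneg fun b _ => mul_nonneg ((hq a).1 b) ((hσ b).1 c), ?_⟩
  simp only [_root_.kernelComp]
  rw [sum_comm]
  simp only [← mul_sum, (hσ _).2, mul_one, (hq a).2]

def fstKernel (α β : Type*) [DecidableEq α] : α × β → α → ℝ :=
  fun x a => if x.1 = a then 1 else 0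

theorem isKernel_fstKernel [Fintype α] [DecidableEq α] : IsKernel (fstKernel α β) :=
  fun x => ⟨fun a => by unfold fstKernel; split_ifs <;> norm_num, by simp [fstKernel]⟩

/-- The weights `p` normalised to a distribution; uniform when they sum to `0`, where the
division would return junk. -/
def normalizeDist [Fintype β] (p : β → ℝ) : β → ℝ :=
  if ∑ b, p b = 0 then fun _ => (Fintype.card β : ℝ)⁻¹ else fun b => p b / ∑ b', p b'

theorem isDist_normalizeDist [Fintype β] [Nonempty β] {p : β → ℝ} (hp : ∀ b, 0 ≤ p b) :
    IsDist (normalizeDist p) := by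
  unfold normalizeDist
  split_ifs with h
  · exact isDist_uniform
  · exact ⟨fun b => div_nonneg (hp b) (sum_nonneg fun b _ => hp b), by rw [← sum_div, div_self h]⟩

theorem mul_normalizeDist [Fintype β] {p : β → ℝ} {x : ℝ} (hx : ∑ b, p b = 0 → x = 0) (b : β) :
    x * normalizeDist p b = p b * x / ∑ b', p b' := by
  unfold normalizeDist
  split_ifs with h
  · simp [hx h, h]
  · ring

def pairKernel [Fintype β] [DecidableEq α] (p : α → β → ℝ) : α → α × β → ℝ :=
  fun a x => if x.1 = a then normalizeDist (p a) x.2 else 0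

theorem isKernel_pairKernel [Fintype α] [Fintype β] [Nonempty β] [DecidableEq α]
    {p : α → β → ℝ} (hp : ∀ a b, 0 ≤ p a b) : IsKernel (pairKernel p) := by
  intro a
  have hd := isDist_normalizeDist (hp a)
  refine ⟨fun x => ?_, by simp [pairKernel, Fintype.sum_prod_type, hd.2]⟩
  unfold pairKernel
  split_ifs
  · exact hd.1 _
  · exact le_rfl

end Kernels

section Payoff

variable {K C C' D D' I J : Type*} [Fintype K] [Fintype C] [Fintype C'] [Fintype D] [Fintype D']
  [Fintype I] [Fintype J]

theorem abs_sum_sum_mul_le_one {s : I → ℝ} {t : J → ℝ} {f : I → J → ℝ} (hs : IsDist s)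
    (ht : IsDist t) (hf : ∀ i j, |f i j| ≤ 1) : |∑ i, ∑ j, s i * t j * f i j| ≤ 1 := by
  have hterm : ∀ i j, |s i * t j * f i j| ≤ s i * t j := fun i j => by
    rw [abs_mul, abs_of_nonneg (mul_nonneg (hs.1 i) (ht.1 j))]
    exact mul_le_of_le_one_right (mul_nonneg (hs.1 i) (ht.1 j)) (hf i j)
  calc |∑ i, ∑ j, s i * t j * f i j| ≤ ∑ i, ∑ j, s i * t j :=
        (abs_sum_le_sum_abs _ _).trans <| sum_le_sum fun i _ =>
          (abs_sum_le_sum_abs _ _).trans <| sum_le_sum fun j _ => hterm i j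
    _ = 1 := by simp only [← mul_sum, ht.2, mul_one, hs.2]

theorem abs_pay_le {u : K × C × D → ℝ} {g : K → I → J → ℝ} {σ : C → I → ℝ} {τ : D → J → ℝ}
    (hg : Bounded1 g) (hσ : IsKernel σ) (hτ : IsKernel τ) : |pay u g σ τ| ≤ ∑ x, |u x| := by
  have hpay : pay u g σ τ =
      ∑ k, ∑ c, ∑ d, u (k, c, d) * ∑ i, ∑ j, σ c i * τ d j * g k i j := by
    simp only [pay, mul_sum, mul_assoc]
  rw [hpay, Fintype.sum_prod_type]
  simp only [Fintype.sum_prod_type]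
  refine (abs_sum_le_sum_abs _ _).trans <| sum_le_sum fun k _ =>
    (abs_sum_le_sum_abs _ _).trans <| sum_le_sum fun c _ =>
    (abs_sum_le_sum_abs _ _).trans <| sum_le_sum fun d _ => ?_
  rw [abs_mul]
  exact mul_le_of_le_one_right (abs_nonneg _) (abs_sum_sum_mul_le_one (hσ c) (hτ d) (hg k))

theorem pay_sub (u u' : K × C × D → ℝ) (g : K → I → J → ℝ) (σ : C → I → ℝ) (τ : D → J → ℝ) :
    pay (u - u') g σ τ = pay u g σ τ - pay u' g σ τ := by
  simp only [pay, Pi.sub_apply, sub_mul, sum_sub_distrib]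

theorem abs_pay_sub_pay_le {u u' : K × C × D → ℝ} {g : K → I → J → ℝ} {σ : C → I → ℝ}
    {τ : D → J → ℝ} (hg : Bounded1 g) (hσ : IsKernel σ) (hτ : IsKernel τ) :
    |pay u g σ τ - pay u' g σ τ| ≤ l1 u u' := by
  rw [← pay_sub]
  exact abs_pay_le hg hσ hτ

theorem pay_garbleL (q : C → C' → ℝ) (u : K × C × D → ℝ) (g : K → I → J → ℝ)
    (σ : C' → I → ℝ) (τ : D → J → ℝ) :
    pay (garbleL q u) g σ τ = pay u g (kernelComp q σ) τ := by
  simp only [pay, garbleL, kernelComp, sum_mul, mul_sum]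
  simp only [sum_comm (s := (univ : Finset C'))]
  simp only [sum_comm (s := (univ : Finset C))]
  ac_rfl

theorem pay_garbleR (q : D → D' → ℝ) (u : K × C × D → ℝ) (g : K → I → J → ℝ)
    (σ : C → I → ℝ) (τ : D' → J → ℝ) :
    pay (garbleR q u) g σ τ = pay u g σ (kernelComp q τ) := by
  simp only [pay, garbleR, kernelComp, sum_mul, mul_sum]
  simp only [sum_comm (s := (univ : Finset D'))]
  simp only [sum_comm (s := (univ : Finset D))]
  ac_rfl

/-- `gameVal u g` unfolds to the supremum of `guarantee u g σ` over kernels `σ`. -/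
def guarantee (u : K × C × D → ℝ) (g : K → I → J → ℝ) (σ : C → I → ℝ) : ℝ :=
  sInf {y : ℝ | ∃ τ : D → J → ℝ, IsKernel τ ∧ y = pay u g σ τ}

theorem guarantee_le_pay {u : K × C × D → ℝ} {g : K → I → J → ℝ} {σ : C → I → ℝ}
    {τ : D → J → ℝ} (hg : Bounded1 g) (hσ : IsKernel σ) (hτ : IsKernel τ) :
    guarantee u g σ ≤ pay u g σ τ := by
  refine csInf_le ⟨-∑ x, |u x|, ?_⟩ ⟨τ, hτ, rfl⟩
  rintro y ⟨τ', hτ', rfl⟩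
  exact neg_le_of_abs_le (abs_pay_le hg hσ hτ')

theorem le_guarantee [Nonempty J] {u : K × C × D → ℝ} {g : K → I → J → ℝ} {σ : C → I → ℝ}
    {a : ℝ} (h : ∀ τ : D → J → ℝ, IsKernel τ → a ≤ pay u g σ τ) : a ≤ guarantee u g σ := by
  obtain ⟨τ, hτ⟩ := exists_isKernel D (β := J)
  refine le_csInf ⟨_, τ, hτ, rfl⟩ ?_
  rintro y ⟨τ', hτ', rfl⟩
  exact h τ' hτ'

theorem guarantee_le_gameVal [Nonempty J] {u : K × C × D → ℝ} {g : K → I → J → ℝ}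
    {σ : C → I → ℝ} (hg : Bounded1 g) (hσ : IsKernel σ) : guarantee u g σ ≤ gameVal u g := by
  obtain ⟨τ, hτ⟩ := exists_isKernel D (β := J)
  refine le_csSup ⟨∑ x, |u x|, ?_⟩ ⟨σ, hσ, rfl⟩
  rintro x ⟨σ', hσ', rfl⟩
  exact (guarantee_le_pay hg hσ' hτ).trans (le_of_abs_le (abs_pay_le hg hσ' hτ))

theorem gameVal_le [Nonempty I] {u : K × C × D → ℝ} {g : K → I → J → ℝ} {a : ℝ}
    (h : ∀ σ : C → I → ℝ, IsKernel σ → guarantee u g σ ≤ a) : gameVal u g ≤ a := by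
  obtain ⟨σ, hσ⟩ := exists_isKernel C (β := I)
  refine csSup_le ⟨_, σ, hσ, rfl⟩ ?_
  rintro x ⟨σ', hσ', rfl⟩
  exact h σ' hσ'

theorem gameVal_le_gameVal_add [Nonempty I] [Nonempty J] {u : K × C × D → ℝ}
    {v : K × C' × D' → ℝ} {g : K → I → J → ℝ} {ε : ℝ} (hg : Bounded1 g)
    (h : ∀ σ : C → I → ℝ, IsKernel σ → ∃ σ' : C' → I → ℝ, IsKernel σ' ∧
      ∀ τ' : D' → J → ℝ, IsKernel τ' → ∃ τ : D → J → ℝ, IsKernel τ ∧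
        pay u g σ τ ≤ pay v g σ' τ' + ε) :
    gameVal u g ≤ gameVal v g + ε := by
  refine gameVal_le fun σ hσ => ?_
  obtain ⟨σ', hσ', hτ⟩ := h σ hσ
  suffices guarantee u g σ - ε ≤ guarantee v g σ' by
    linarith [guarantee_le_gameVal (u := v) hg hσ']
  refine le_guarantee fun τ' hτ' => ?_
  obtain ⟨τ, hτ, hle⟩ := hτ τ' hτ'
  linarith [guarantee_le_pay (u := u) hg hσ hτ]

end Payoff

section Garbling

variable {K C C₁ D D₁ : Type*}

theorem garbleL_nonneg [Fintype C] {q : C → C₁ → ℝ} {u : K × C × D → ℝ}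
    (hq : ∀ c c₁, 0 ≤ q c c₁) (hu : ∀ x, 0 ≤ u x) (x : K × C₁ × D) : 0 ≤ garbleL q u x :=
  sum_nonneg fun _ _ => mul_nonneg (hu _) (hq _ _)

theorem garbleR_nonneg [Fintype D] {q : D → D₁ → ℝ} {u : K × C × D → ℝ}
    (hq : ∀ d d₁, 0 ≤ q d d₁) (hu : ∀ x, 0 ≤ u x) (x : K × C × D₁) : 0 ≤ garbleR q u x :=
  sum_nonneg fun _ _ => mul_nonneg (hu _) (hq _ _)

theorem garbleL_fstKernel_apply [Fintype C] [Fintype C₁] [DecidableEq C]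
    (u : K × (C × C₁) × D → ℝ) (k : K) (c : C) (d : D) :
    garbleL (fstKernel C C₁) u (k, c, d) = ∑ c₁, u (k, (c, c₁), d) := by
  rw [garbleL, Fintype.sum_prod_type, sum_comm]
  simp [fstKernel]

theorem garbleR_fstKernel_apply [Fintype D] [Fintype D₁] [DecidableEq D]
    (u : K × C × (D × D₁) → ℝ) (k : K) (c : C) (d : D) :
    garbleR (fstKernel D D₁) u (k, c, d) = ∑ d₁, u (k, c, (d, d₁)) := by
  rw [garbleR, Fintype.sum_prod_type, sum_comm]
  simp [fstKernel]

theorem garbleL_pairKernel_apply [Fintype C] [Fintype C₁] [DecidableEq C] (p : C → C₁ → ℝ)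
    (v : K × C × D → ℝ) (k : K) (c : C) (c₁ : C₁) (d : D) :
    garbleL (pairKernel p) v (k, (c, c₁), d) = v (k, c, d) * normalizeDist (p c) c₁ := by
  simp [garbleL, pairKernel]

theorem garbleR_pairKernel_apply [Fintype D] [Fintype D₁] [DecidableEq D] (p : D → D₁ → ℝ)
    (v : K × C × D → ℝ) (k : K) (c : C) (d : D) (d₁ : D₁) :
    garbleR (pairKernel p) v (k, c, (d, d₁)) = v (k, c, d) * normalizeDist (p d) d₁ := by
  simp [garbleR, pairKernel]

end Garbling

section ConditionalIndependence

theorem le_sum_sum_of_nonneg {α β : Type*} [Fintype α] [Fintype β] {f : α → β → ℝ}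
    (hf : ∀ a b, 0 ≤ f a b) (a : α) (b : β) : f a b ≤ ∑ a', ∑ b', f a' b' :=
  (single_le_sum (fun b' _ => hf a b') (mem_univ b)).trans <|
    single_le_sum (f := fun a' => ∑ b', f a' b') (fun a' _ => sum_nonneg fun b' _ => hf a' b')
      (mem_univ a)

variable {K C C₁ D D₁ : Type*} [Fintype K] [Fintype C] [Fintype C₁] [Fintype D] [Fintype D₁]

theorem l1_garbleL_pairKernel_eq [DecidableEq C] {w : K × (C × C₁) × D → ℝ}
    (hw : ∀ x, 0 ≤ w x) {v : K × C × D → ℝ}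
    (hv : ∀ k c d, v (k, c, d) = ∑ c₁, w (k, (c, c₁), d)) :
    l1 w (garbleL (pairKernel fun c c₁ => ∑ k, ∑ d, w (k, (c, c₁), d)) v) =
      ∑ c, ∑ c₁, ∑ k, ∑ d, |w (k, (c, c₁), d) - (∑ k', ∑ d', w (k', (c, c₁), d')) * v (k, c, d)
        / ∑ k', ∑ c₁', ∑ d', w (k', (c, c₁'), d')| := by
  rw [l1, Fintype.sum_prod_type]
  simp only [Fintype.sum_prod_type (f := fun x : (C × C₁) × D => _)]
  rw [sum_comm, Fintype.sum_prod_type]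
  refine sum_congr rfl fun c _ => sum_congr rfl fun c₁ _ => sum_congr rfl fun k _ =>
    sum_congr rfl fun d _ => ?_
  have hv_le : v (k, c, d) ≤ ∑ c₁', ∑ k', ∑ d', w (k', (c, c₁'), d') := by
    rw [hv]
    exact sum_le_sum fun c₁' _ => le_sum_sum_of_nonneg (fun k' d' => hw (k', (c, c₁'), d')) k d
  have hv_zero : ∑ c₁', ∑ k', ∑ d', w (k', (c, c₁'), d') = 0 → v (k, c, d) = 0 := fun h =>
    le_antisymm (h ▸ hv_le) (hv k c d ▸ sum_nonneg fun _ _ => hw _)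
  rw [garbleL_pairKernel_apply, mul_normalizeDist hv_zero, sum_comm (s := (univ : Finset C₁))]

theorem l1_garbleR_pairKernel_eq [DecidableEq D] {w : K × C × (D × D₁) → ℝ}
    (hw : ∀ x, 0 ≤ w x) {v : K × C × D → ℝ}
    (hv : ∀ k c d, v (k, c, d) = ∑ d₁, w (k, c, (d, d₁))) :
    l1 w (garbleR (pairKernel fun d d₁ => ∑ k, ∑ c, w (k, c, (d, d₁))) v) =
      ∑ d, ∑ d₁, ∑ k, ∑ c, |w (k, c, (d, d₁)) - (∑ k', ∑ c', w (k', c', (d, d₁))) * v (k, c, d)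
        / ∑ k', ∑ c', ∑ d₁', w (k', c', (d, d₁'))| := by
  rw [l1, Fintype.sum_prod_type]
  simp only [Fintype.sum_prod_type (f := fun x : C × (D × D₁) => _)]
  rw [sum_comm_cycle, Fintype.sum_prod_type]
  refine sum_congr rfl fun d _ => sum_congr rfl fun d₁ _ => sum_congr rfl fun k _ =>
    sum_congr rfl fun c _ => ?_
  have hv_le : v (k, c, d) ≤ ∑ d₁', ∑ k', ∑ c', w (k', c', (d, d₁')) := by
    rw [hv]
    exact sum_le_sum fun d₁' _ => le_sum_sum_of_nonneg (fun k' c' => hw (k', c', (d, d₁'))) k c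
  have hv_zero : ∑ d₁', ∑ k', ∑ c', w (k', c', (d, d₁')) = 0 → v (k, c, d) = 0 := fun h =>
    le_antisymm (h ▸ hv_le) (hv k c d ▸ sum_nonneg fun _ _ => hw _)
  rw [garbleR_pairKernel_apply, mul_normalizeDist hv_zero,
    ← sum_comm_cycle (s := (univ : Finset K))]

end ConditionalIndependence

section Transfer

variable {K C C₁ C' D D₁ D' I J : Type*} [Fintype K] [Fintype C] [Fintype C₁] [Fintype C']
  [Fintype D] [Fintype D₁] [Fintype D'] [Fintype I] [Fintype J] [Nonempty I] [Nonempty J]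
  {g : K → I → J → ℝ} {ε : ℝ}

theorem gameVal_le_add_of_l1_garbleL_le [DecidableEq D] {u : K × C' × (D × D₁) → ℝ}
    {v : K × C × D → ℝ} {q : C → C' → ℝ} (hg : Bounded1 g) (hq : IsKernel q)
    (hl1 : l1 (garbleR (fstKernel D D₁) u) (garbleL q v) ≤ ε) :
    gameVal u g ≤ gameVal v g + ε := by
  refine gameVal_le_gameVal_add hg fun σ hσ => ⟨kernelComp q σ, hq.kernelComp hσ, fun τ hτ =>
    ⟨kernelComp (fstKernel D D₁) τ, isKernel_fstKernel.kernelComp hτ, ?_⟩⟩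
  rw [← pay_garbleR, ← pay_garbleL]
  linarith [le_abs_self (pay (garbleR (fstKernel D D₁) u) g σ τ - pay (garbleL q v) g σ τ),
    abs_pay_sub_pay_le (u := garbleR (fstKernel D D₁) u) (u' := garbleL q v) hg hσ hτ]

theorem gameVal_le_add_of_l1_garbleR_le [DecidableEq C] {u : K × (C × C₁) × D' → ℝ}
    {v : K × C × D → ℝ} {q : D → D' → ℝ} (hg : Bounded1 g) (hq : IsKernel q)
    (hl1 : l1 (garbleL (fstKernel C C₁) u) (garbleR q v) ≤ ε) :
    gameVal v g ≤ gameVal u g + ε := by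
  refine gameVal_le_gameVal_add hg fun σ hσ => ⟨kernelComp (fstKernel C C₁) σ,
    isKernel_fstKernel.kernelComp hσ, fun τ hτ => ⟨kernelComp q τ, hq.kernelComp hτ, ?_⟩⟩
  rw [← pay_garbleR, ← pay_garbleL]
  linarith [neg_abs_le (pay (garbleL (fstKernel C C₁) u) g σ τ - pay (garbleR q v) g σ τ),
    abs_pay_sub_pay_le (u := garbleL (fstKernel C C₁) u) (u' := garbleR q v) hg hσ hτ]

end Transfer

end

theorem stmt7 {K C C₁ D D₁ I J : Type*} [Fintype K] [Fintype C] [Fintype C₁]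
    [Fintype D] [Fintype D₁] [Fintype I] [Nonempty I] [Fintype J] [Nonempty J]
    (u : K × (C × C₁) × (D × D₁) → ℝ) (hu : IsDist u) (ε : ℝ)
    -- `d₁` is ε-conditionally independent from `(k,c)` given `d`:
    (hCI2 : ∑ d : D, ∑ d₁ : D₁, ∑ k : K, ∑ c : C,
        |(∑ c₁, u (k, (c, c₁), (d, d₁)))
          - (∑ k', ∑ c', ∑ c₁, u (k', (c', c₁), (d, d₁)))
            * (∑ c₁, ∑ d₁', u (k, (c, c₁), (d, d₁')))
            / (∑ k', ∑ c', ∑ c₁, ∑ d₁', u (k', (c', c₁), (d, d₁')))| ≤ ε)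
    -- `c₁` is ε-conditionally independent from `(k,d)` given `c`:
    (hCI1 : ∑ c : C, ∑ c₁ : C₁, ∑ k : K, ∑ d : D,
        |(∑ d₁, u (k, (c, c₁), (d, d₁)))
          - (∑ k', ∑ d', ∑ d₁, u (k', (c, c₁), (d', d₁)))
            * (∑ c₁', ∑ d₁, u (k, (c, c₁'), (d, d₁)))
            / (∑ k', ∑ c₁', ∑ d', ∑ d₁, u (k', (c, c₁'), (d', d₁)))| ≤ ε)
    (v : K × C × D → ℝ)
    (hv : ∀ k c d, v (k, c, d) = ∑ c₁, ∑ d₁, u (k, (c, c₁), (d, d₁)))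
    (g : K → I → J → ℝ) (hg : Bounded1 g) :
    |gameVal u g - gameVal v g| ≤ ε := by
  classical
  have : Nonempty C₁ := hu.nonempty.map fun x => x.2.1.2
  have : Nonempty D₁ := hu.nonempty.map fun x => x.2.2.2
  set w₁ := garbleR (fstKernel D D₁) u
  set w₂ := garbleL (fstKernel C C₁) u
  have hw₁ : ∀ x, 0 ≤ w₁ x := garbleR_nonneg (fun x => (isKernel_fstKernel x).1) hu.1
  have hw₂ : ∀ x, 0 ≤ w₂ x := garbleL_nonneg (fun x => (isKernel_fstKernel x).1) hu.1
  have hl1₁ : l1 w₁ (garbleL (pairKernel fun c c₁ => ∑ k, ∑ d, w₁ (k, (c, c₁), d)) v) ≤ ε := by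
    rw [l1_garbleL_pairKernel_eq hw₁ fun k c d => by simp only [w₁, garbleR_fstKernel_apply, hv]]
    simpa only [w₁, garbleR_fstKernel_apply, hv] using hCI1
  have hl1₂ : l1 w₂ (garbleR (pairKernel fun d d₁ => ∑ k, ∑ c, w₂ (k, c, (d, d₁))) v) ≤ ε := by
    rw [l1_garbleR_pairKernel_eq hw₂ fun k c d => by
      simp only [w₂, garbleL_fstKernel_apply, hv]; exact sum_comm]
    have hN : ∀ d, ∑ k', ∑ c', ∑ c₁, ∑ d₁', u (k', (c', c₁), (d, d₁')) =
        ∑ k', ∑ c', ∑ d₁', ∑ c₁, u (k', (c', c₁), (d, d₁')) :=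
      fun d => sum_congr rfl fun _ _ => sum_congr rfl fun _ _ => sum_comm
    simpa only [w₂, garbleL_fstKernel_apply, hv, ← hN] using hCI2
  have h₁ := gameVal_le_add_of_l1_garbleL_le hg
    (isKernel_pairKernel fun c c₁ => sum_nonneg fun k _ => sum_nonneg fun d _ => hw₁ _) hl1₁
  have h₂ := gameVal_le_add_of_l1_garbleR_le hg
    (isKernel_pairKernel fun d d₁ => sum_nonneg fun k _ => sum_nonneg fun c _ => hw₂ _) hl1₂
  rw [abs_sub_le_iff]
  constructor <;> linarith
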